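/- Let c ≠ 0 be a real constant, z_b : ℝ → ℝ differentiable, and let h, u, w, σ, p_b : ℝ → ℝ → ℝ be continuously differentiable functions of (x,t). Assume that at every point (x,t) the mass equation ∂_t h + ∂_x(h·u) = 0 and the bottom-pressure evolution equation ∂_t(h·p_b) + ∂_x(h·u·p_b) − 6·c²·u·∂_x z_b = −6·c²·(w − σ/2) hold. Then at every point (x,t): p_b·(u·∂_x z_b − w + σ/2) = (1/(6·c²))·( ∂_t(h·p_b²/2) + ∂_x(h·u·p_b²/2) ). -/

import Mathlib

/-- Partial derivative with respect to the first (space) argument. -/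
noncomputable def pdx (f : ℝ → ℝ → ℝ) (x t : ℝ) : ℝ := deriv (fun x' => f x' t) x

/-- Partial derivative with respect to the second (time) argument. -/
noncomputable def pdt (f : ℝ → ℝ → ℝ) (x t : ℝ) : ℝ := deriv (fun t' => f x t') t

/-!
Multiply the `h p_b` equation by `p_b` and subtract `p_b² / 2` times the mass equation: by the
product rule the left-hand side becomes exactly `∂_t(h p_b²/2) + ∂_x(h u p_b²/2)`.
-/

theorem DifferentiableAt.comp_prodMk_right {𝕜 E F G : Type*} [NontriviallyNormedField 𝕜]
    [NormedAddCommGroup E] [NormedSpace 𝕜 E] [NormedAddCommGroup F] [NormedSpace 𝕜 F]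
    [NormedAddCommGroup G] [NormedSpace 𝕜 G] {f : E → F → G} {x : E} {t : F}
    (hf : DifferentiableAt 𝕜 (fun p : E × F => f p.1 p.2) (x, t)) :
    DifferentiableAt 𝕜 (fun x' => f x' t) x :=
  hf.comp (g := fun p : E × F => f p.1 p.2) (f := fun x' => (x', t)) x
    (differentiableAt_id.prodMk (differentiableAt_const t))

theorem DifferentiableAt.comp_prodMk_left {𝕜 E F G : Type*} [NontriviallyNormedField 𝕜]
    [NormedAddCommGroup E] [NormedSpace 𝕜 E] [NormedAddCommGroup F] [NormedSpace 𝕜 F]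
    [NormedAddCommGroup G] [NormedSpace 𝕜 G] {f : E → F → G} {x : E} {t : F}
    (hf : DifferentiableAt 𝕜 (fun p : E × F => f p.1 p.2) (x, t)) :
    DifferentiableAt 𝕜 (fun t' => f x t') t :=
  hf.comp (g := fun p : E × F => f p.1 p.2) (f := fun t' => (x, t')) t
    ((differentiableAt_const x).prodMk differentiableAt_id)

theorem deriv_mul_sq_div_two {𝕜 : Type*} [NontriviallyNormedField 𝕜] [CharZero 𝕜]
    {a q : 𝕜 → 𝕜} {y : 𝕜}
    (ha : DifferentiableAt 𝕜 a y) (hq : DifferentiableAt 𝕜 q y) :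
    deriv (fun y => a y * q y ^ 2 / 2) y
      = q y * deriv (fun y => a y * q y) y - q y ^ 2 / 2 * deriv a y := by
  have hq2 : HasDerivAt (fun y => q y ^ 2) (2 * q y * deriv q y) y := by
    simpa using hq.hasDerivAt.fun_pow 2
  rw [((ha.hasDerivAt.fun_mul hq2).div_const 2).deriv,
    (ha.hasDerivAt.fun_mul hq.hasDerivAt).deriv]
  field_simp
  ring

theorem pdt_add_pdx_mul_sq_div_two {h u q : ℝ → ℝ → ℝ} {x t : ℝ}
    (hh : DifferentiableAt ℝ (fun p : ℝ × ℝ => h p.1 p.2) (x, t))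
    (hhu : DifferentiableAt ℝ (fun p : ℝ × ℝ => h p.1 p.2 * u p.1 p.2) (x, t))
    (hq : DifferentiableAt ℝ (fun p : ℝ × ℝ => q p.1 p.2) (x, t)) :
    pdt (fun x t => h x t * q x t ^ 2 / 2) x t + pdx (fun x t => h x t * u x t * q x t ^ 2 / 2) x t
      = q x t * (pdt (fun x t => h x t * q x t) x t + pdx (fun x t => h x t * u x t * q x t) x t)
        - q x t ^ 2 / 2 * (pdt h x t + pdx (fun x t => h x t * u x t) x t) := by
  have hdt : pdt (fun x t => h x t * q x t ^ 2 / 2) x t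
      = q x t * pdt (fun x t => h x t * q x t) x t - q x t ^ 2 / 2 * pdt h x t :=
    deriv_mul_sq_div_two hh.comp_prodMk_left hq.comp_prodMk_left
  have hdx : pdx (fun x t => h x t * u x t * q x t ^ 2 / 2) x t
      = q x t * pdx (fun x t => h x t * u x t * q x t) x t
        - q x t ^ 2 / 2 * pdx (fun x t => h x t * u x t) x t :=
    deriv_mul_sq_div_two (hhu.comp_prodMk_right (f := fun x t => h x t * u x t))
      hq.comp_prodMk_right
  rw [hdt, hdx]
  ring

theorem stmt_5_general (c : ℝ) (hc : c ≠ 0) (zb : ℝ → ℝ)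
    (h u w sg pb : ℝ → ℝ → ℝ)
    (hh : ContDiff ℝ 1 (fun p : ℝ × ℝ => h p.1 p.2))
    (hu : ContDiff ℝ 1 (fun p : ℝ × ℝ => u p.1 p.2))
    (hpb : ContDiff ℝ 1 (fun p : ℝ × ℝ => pb p.1 p.2))
    (mass : ∀ x t : ℝ, pdt h x t + pdx (fun x t => h x t * u x t) x t = 0)
    (pbEvol : ∀ x t : ℝ,
      pdt (fun x t => h x t * pb x t) x t
        + pdx (fun x t => h x t * u x t * pb x t) x t
        - 6 * c ^ 2 * u x t * deriv zb x
      = -(6 * c ^ 2) * (w x t - sg x t / 2)) :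
    ∀ x t : ℝ,
      pb x t * (u x t * deriv zb x - w x t + sg x t / 2)
      = (1 / (6 * c ^ 2)) *
          (pdt (fun x t => h x t * (pb x t) ^ 2 / 2) x t
            + pdx (fun x t => h x t * u x t * (pb x t) ^ 2 / 2) x t) := by
  intro x t
  have flux : pdt (fun x t => h x t * pb x t) x t + pdx (fun x t => h x t * u x t * pb x t) x t
      = 6 * c ^ 2 * (u x t * deriv zb x - w x t + sg x t / 2) := by
    linear_combination pbEvol x t
  have hhu := (hh.mul hu).differentiable one_ne_zero
  rw [pdt_add_pdx_mul_sq_div_two (hh.differentiable one_ne_zero (x, t)) (hhu (x, t))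
    (hpb.differentiable one_ne_zero (x, t)), mass x t, flux]
  field_simp
  ring

theorem stmt_5 (c : ℝ) (hc : c ≠ 0) (zb : ℝ → ℝ) (hzb : Differentiable ℝ zb)
    (h u w sg pb : ℝ → ℝ → ℝ)
    (hh : ContDiff ℝ 1 (fun p : ℝ × ℝ => h p.1 p.2))
    (hu : ContDiff ℝ 1 (fun p : ℝ × ℝ => u p.1 p.2))
    (hw : ContDiff ℝ 1 (fun p : ℝ × ℝ => w p.1 p.2))
    (hsg : ContDiff ℝ 1 (fun p : ℝ × ℝ => sg p.1 p.2))
    (hpb : ContDiff ℝ 1 (fun p : ℝ × ℝ => pb p.1 p.2))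
    (mass : ∀ x t : ℝ, pdt h x t + pdx (fun x t => h x t * u x t) x t = 0)
    (pbEvol : ∀ x t : ℝ,
      pdt (fun x t => h x t * pb x t) x t
        + pdx (fun x t => h x t * u x t * pb x t) x t
        - 6 * c ^ 2 * u x t * deriv zb x
      = -(6 * c ^ 2) * (w x t - sg x t / 2)) :
    ∀ x t : ℝ,
      pb x t * (u x t * deriv zb x - w x t + sg x t / 2)
      = (1 / (6 * c ^ 2)) *
          (pdt (fun x t => h x t * (pb x t) ^ 2 / 2) x t
            + pdx (fun x t => h x t * u x t * (pb x t) ^ 2 / 2) x t) :=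
  stmt_5_general c hc zb h u w sg pb hh hu hpb mass pbEvol
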